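/- A morphism p : A → B in Set^𝕋 is invariant under clock introduction if and only if for every time object (ℰ, δ), every clock λ ∉ ℰ and every n ∈ ℕ, the naturality square with top edge A(ι) : A(ℰ, δ) → A(ℰ ∪ {λ}, δ[λ ↦ n]), left edge the component p_{(ℰ, δ)}, right edge the component p_{(ℰ ∪ {λ}, δ[λ ↦ n])}, and bottom edge B(ι) : B(ℰ, δ) → B(ℰ ∪ {λ}, δ[λ ↦ n]), where ι : (ℰ, δ) → (ℰ ∪ {λ}, δ[λ ↦ n]) is the inclusion, is a pullback square of sets. -/

import Mathlib

open CategoryTheory CategoryTheory.Limits Opposite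

/-- A time object: a finite set of clocks together with the number of ticks left on each. -/
structure TimeObj (C : Type) where
  E : Finset C
  d : {x // x ∈ E} → ℕ

/-- A morphism of time objects. -/
structure TimeHom {C : Type} (A B : TimeObj C) where
  toFun : {x // x ∈ A.E} → {x // x ∈ B.E}
  le : ∀ x, B.d (toFun x) ≤ A.d x

theorem TimeHom.ext' {C : Type} {A B : TimeObj C} {f g : TimeHom A B}
    (h : f.toFun = g.toFun) : f = g := by
  cases f; cases g; cases h; rfl

/-- The category 𝕋 of time objects. -/
instance TimeCat (C : Type) : Category (TimeObj C) where
  Hom := TimeHom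
  id _ := ⟨fun x => x, fun _ => le_rfl⟩
  comp f g := ⟨TimeHom.toFun g ∘ TimeHom.toFun f,
    fun x => le_trans (TimeHom.le g _) (TimeHom.le f _)⟩
  id_comp _ := rfl
  comp_id _ := rfl
  assoc _ _ _ := rfl

/-- The time object `({λ}, n)`. -/
def single (C : Type) (l : C) (n : ℕ) : TimeObj C :=
  ⟨{l}, fun _ => n⟩

/-- The object of clocks 𝒞 in `Set^𝕋`. -/
def Clocks (C : Type) : TimeObj C ⥤ Type where
  obj A := {x // x ∈ A.E}
  map f := TypeCat.ofHom (TimeHom.toFun f)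
  map_id _ := rfl
  map_comp _ _ := rfl

open MonoidalCategory

/-- In a category with (chosen) finite products, a morphism `p : A ⟶ B` is
*orthogonal* to an object `X` if every commuting square whose left edge is a
projection `Y ⊗ X ⟶ Y` and whose right edge is `p` has a unique diagonal filler. -/
def OrthogonalTo {𝒞 : Type u} [Category.{v} 𝒞] [CartesianMonoidalCategory 𝒞]
    {A B : 𝒞} (p : A ⟶ B) (X : 𝒞) : Prop :=
  ∀ (Y : 𝒞) (f : Y ⊗ X ⟶ A) (g : Y ⟶ B),
    f ≫ p = CartesianMonoidalCategory.fst Y X ≫ g →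
      ∃! h : Y ⟶ A, CartesianMonoidalCategory.fst Y X ≫ h = f ∧ h ≫ p = g

/-- A morphism of presheaves on 𝕋 is invariant under clock introduction if it is
orthogonal to every representable `y({λ}, n)`. -/
def InvariantUnderClockIntro {C : Type} {A B : TimeObj C ⥤ Type} (p : A ⟶ B) : Prop :=
  ∀ (l : C) (n : ℕ), OrthogonalTo p (coyoneda.obj (op (single C l n)))

/-- The time object `(ℰ ∪ {λ}, δ[λ ↦ n])`. -/
def TimeObj.extend {C : Type} [DecidableEq C] (A : TimeObj C) (l : C) (n : ℕ) :
    TimeObj C where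
  E := insert l A.E
  d x := if h : x.1 ∈ A.E then A.d ⟨x.1, h⟩ else n

/-- The inclusion `(ℰ, δ) ⟶ (ℰ ∪ {λ}, δ[λ ↦ n])`. -/
def inclExtend {C : Type} [DecidableEq C] (A : TimeObj C) (l : C) (n : ℕ) :
    A ⟶ A.extend l n :=
  ⟨fun x => ⟨x.1, Finset.mem_insert_of_mem x.2⟩, fun x => by
    dsimp [TimeObj.extend]
    simp [x.2]⟩


/-!
Orthogonality of `p` to `X` asks for unique fillers of the squares from `Y ⊗ X ⟶ Y` for all
presheaves `Y`, and it suffices to ask this for representable `Y = y(ℰ, δ)`: a filler for a general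
`Y` is assembled from the fillers of the squares restricted along the elements `y(ℰ, δ) ⟶ Y`, and
uniqueness makes these compatible.

For a clock `μ ∉ ℰ`, the time object `(ℰ ∪ {μ}, δ[μ ↦ n])` is a coproduct of `(ℰ, δ)` and
`({λ}, n)` in 𝕋, so `y(ℰ, δ) ⊗ y({λ}, n) ≅ y(ℰ ∪ {μ}, δ[μ ↦ n])`. By the Yoneda lemma a square
with `Y = y(ℰ, δ)` is then a pair `(a', b)` as in the naturality square at the inclusion, and a
filler is an element of `A(ℰ, δ)` over it; so unique fillers at `y(ℰ, δ)` is the pullback property.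
As there are infinitely many clocks, a fresh `μ` always exists.
-/

universe u v

open CartesianMonoidalCategory

section UniqueFillers

variable {𝒞 : Type u} [Category.{v} 𝒞] [CartesianMonoidalCategory 𝒞] {A B : 𝒞}

def UniqueFillers (p : A ⟶ B) (Y X : 𝒞) : Prop :=
  ∀ (f : Y ⊗ X ⟶ A) (g : Y ⟶ B),
    f ≫ p = fst Y X ≫ g → ∃! h : Y ⟶ A, fst Y X ≫ h = f ∧ h ≫ p = g

variable {p : A ⟶ B} {X Y Y' : 𝒞}

lemma square_precomp {f : Y ⊗ X ⟶ A} {g : Y ⟶ B} (hfg : f ≫ p = fst Y X ≫ g)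
    (u : Y' ⟶ Y) : (u ▷ X ≫ f) ≫ p = fst Y' X ≫ u ≫ g := by
  rw [Category.assoc, hfg, whiskerRight_fst_assoc]

lemma filler_precomp {f : Y ⊗ X ⟶ A} {g : Y ⟶ B} {h : Y ⟶ A}
    (hh : fst Y X ≫ h = f ∧ h ≫ p = g) (u : Y' ⟶ Y) :
    fst Y' X ≫ u ≫ h = u ▷ X ≫ f ∧ (u ≫ h) ≫ p = u ≫ g := by
  rw [← whiskerRight_fst_assoc, hh.1, Category.assoc, hh.2]
  exact ⟨rfl, rfl⟩

end UniqueFillers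

section Presheaves

variable {𝒟 : Type u} [Category.{v} 𝒟] {A B : 𝒟 ⥤ Type v} {p : A ⟶ B}

lemma orthogonalTo_iff_forall_coyoneda {X : 𝒟 ⥤ Type v} :
    OrthogonalTo p X ↔ ∀ E : 𝒟, UniqueFillers p (coyoneda.obj (op E)) X := by
  refine ⟨fun H E => H _, fun H Y f g hfg => ?_⟩
  choose k hk hk_unique using fun E (y : Y.obj E) =>
    H E _ _ (square_precomp hfg (coyonedaEquiv.symm y))
  have k_map : ∀ {E D : 𝒟} (τ : E ⟶ D) (y : Y.obj E),
      k D (Y.map τ y) = coyoneda.map τ.op ≫ k E y := by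
    intro E D τ y
    refine (hk_unique D _ _ ?_).symm
    rw [coyonedaEquiv_symm_map, comp_whiskerRight, Category.assoc, Category.assoc]
    exact filler_precomp (hk E y) _
  let h : Y ⟶ A :=
    { app := fun E => TypeCat.ofHom fun y => coyonedaEquiv (k E y)
      naturality := fun E D τ => by
        ext y
        simp [k_map, coyonedaEquiv_naturality] }
  refine ⟨h, ⟨?_, ?_⟩, fun h' hh' => ?_⟩
  · ext E ⟨y, x⟩
    have := congr_arg (fun t => t.app E (𝟙 E, x)) (hk E y).1
    exact this.trans (congr_arg (fun z => f.app E (z, x)) (Y.map_id_apply (X := E) y))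
  · ext E y
    have := congr_arg coyonedaEquiv (hk E y).2
    simpa [h, coyonedaEquiv_comp] using this
  · ext E y
    have := hk_unique E y _ (filler_precomp hh' (coyonedaEquiv.symm y))
    simpa [h, coyonedaEquiv_comp] using congr_arg coyonedaEquiv this

lemma isPullback_naturality_iff {E E' : 𝒟} (i : E ⟶ E') :
    IsPullback (A.map i) (p.app E) (p.app E') (B.map i) ↔
      ∀ a' b, p.app E' a' = B.map i b → ∃! a, A.map i a = a' ∧ p.app E a = b := by
  rw [Types.isPullback_iff]
  simp only [p.naturality, true_and]
  constructor
  · rintro ⟨inj, ex⟩ a' b hab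
    obtain ⟨a, ha⟩ := ex a' b hab
    exact ⟨a, ha, fun c hc => inj _ _ ⟨hc.1.trans ha.1.symm, hc.2.trans ha.2.symm⟩⟩
  · intro H
    refine ⟨fun a c ⟨h₁, h₂⟩ => ?_, fun a' b hab => (H a' b hab).exists⟩
    exact (H _ _ (NatTrans.naturality_apply p i a)).unique ⟨rfl, rfl⟩ ⟨h₁.symm, h₂.symm⟩

lemma uniqueFillers_coyoneda_iff_isPullback {X : 𝒟 ⥤ Type v} {E E' : 𝒟} {i : E ⟶ E'}
    (φ : coyoneda.obj (op E') ≅ coyoneda.obj (op E) ⊗ X)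
    (hφ : φ.hom ≫ fst _ _ = coyoneda.map i.op) :
    UniqueFillers p (coyoneda.obj (op E)) X ↔
      IsPullback (A.map i) (p.app E) (p.app E') (B.map i) := by
  have fst_comp : ∀ {F : 𝒟 ⥤ Type v} (u : coyoneda.obj (op E) ⟶ F),
      coyonedaEquiv (φ.hom ≫ fst _ _ ≫ u) = F.map i (coyonedaEquiv u) := by
    intro F u
    rw [reassoc_of% hφ, coyonedaEquiv_naturality]
  let e : (coyoneda.obj (op E) ⊗ X ⟶ A) ≃ A.obj E' := φ.homFromEquiv.symm.trans coyonedaEquiv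
  rw [isPullback_naturality_iff]
  refine e.forall_congr fun f => coyonedaEquiv.forall_congr fun g => imp_congr ?_ <|
    coyonedaEquiv.existsUnique_congr fun h => and_congr ?_ ?_
  · rw [← φ.cancel_iso_hom_left, ← coyonedaEquiv.injective.eq_iff, fst_comp]
    rfl
  · rw [← φ.cancel_iso_hom_left, ← coyonedaEquiv.injective.eq_iff, fst_comp]
    rfl
  · rw [← coyonedaEquiv.injective.eq_iff, coyonedaEquiv_comp]

end Presheaves

namespace TimeObj

variable {C : Type} {E D : TimeObj C} {l μ : C} {n : ℕ}

lemma single_hom_ext {e e' : single C l n ⟶ D}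
    (h : e.toFun ⟨l, Finset.mem_singleton_self l⟩ = e'.toFun ⟨l, Finset.mem_singleton_self l⟩) :
    e = e' := by
  refine TimeHom.ext' (funext fun x => ?_)
  obtain ⟨x, hx⟩ := x
  obtain rfl : x = l := Finset.mem_singleton.mp hx
  exact h

variable [DecidableEq C]

def singleToExtend (l : C) (hμ : μ ∉ E.E) : single C l n ⟶ E.extend μ n where
  toFun _ := ⟨μ, Finset.mem_insert_self μ E.E⟩
  le _ := by simp [TimeObj.extend, single, hμ]

def extendDesc (σ : E ⟶ D) (e : single C l n ⟶ D) : E.extend μ n ⟶ D where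
  toFun x := if h : x.1 ∈ E.E then σ.toFun ⟨x.1, h⟩
    else e.toFun ⟨l, Finset.mem_singleton_self l⟩
  le x := by
    by_cases h : x.1 ∈ E.E
    · simpa [TimeObj.extend, h] using TimeHom.le σ _
    · simpa [TimeObj.extend, single, h] using TimeHom.le e _

def extendHomEquiv (l : C) (hμ : μ ∉ E.E) (D : TimeObj C) :
    (E.extend μ n ⟶ D) ≃ (E ⟶ D) × (single C l n ⟶ D) where
  toFun σ := (inclExtend E μ n ≫ σ, singleToExtend l hμ ≫ σ)
  invFun σe := extendDesc σe.1 σe.2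
  left_inv σ := by
    refine TimeHom.ext' (funext fun ⟨x, hx⟩ => ?_)
    by_cases h : x ∈ E.E
    · exact dif_pos h
    · obtain rfl : x = μ := (Finset.mem_insert.mp hx).resolve_right h
      exact dif_neg h
  right_inv σe := by
    refine Prod.ext (TimeHom.ext' (funext fun x => dif_pos x.2)) (single_hom_ext ?_)
    exact dif_neg hμ

def extendCoyonedaIso (l : C) (hμ : μ ∉ E.E) :
    coyoneda.obj (op (E.extend μ n)) ≅
      coyoneda.obj (op E) ⊗ coyoneda.obj (op (single C l n)) :=
  NatIso.ofComponents (fun D => (extendHomEquiv l hμ D).toIso) fun _ => rfl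

lemma extendCoyonedaIso_hom_fst (l : C) (hμ : μ ∉ E.E) :
    (extendCoyonedaIso (n := n) l hμ).hom ≫ fst _ _ = coyoneda.map (inclExtend E μ n).op :=
  rfl

end TimeObj

theorem statement_6_general (C : Type) [Infinite C] [DecidableEq C]
    {A B : TimeObj C ⥤ Type} (p : A ⟶ B) :
    InvariantUnderClockIntro p ↔
      ∀ (Eδ : TimeObj C) (l : C), l ∉ Eδ.E → ∀ n : ℕ,
        IsPullback (A.map (inclExtend Eδ l n)) (p.app Eδ)
          (p.app (Eδ.extend l n)) (B.map (inclExtend Eδ l n)) := by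
  constructor
  · intro hp E l hl n
    exact (uniqueFillers_coyoneda_iff_isPullback _
      (TimeObj.extendCoyonedaIso_hom_fst l hl)).1 (hp l n _)
  · intro hpb l n
    refine orthogonalTo_iff_forall_coyoneda.2 fun E => ?_
    obtain ⟨μ, hμ⟩ := Infinite.exists_notMem_finset E.E
    exact (uniqueFillers_coyoneda_iff_isPullback _
      (TimeObj.extendCoyonedaIso_hom_fst l hμ)).2 (hpb E μ hμ n)

/-- A morphism `p : A ⟶ B` of presheaves on 𝕋 is invariant under clock introduction
iff for every time object `(ℰ, δ)`, clock `λ ∉ ℰ` and `n : ℕ`, the naturality square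
of `p` at the inclusion `ι : (ℰ, δ) ⟶ (ℰ ∪ {λ}, δ[λ ↦ n])` is a pullback of sets. -/
theorem statement_6 (C : Type) [Countable C] [Infinite C] [DecidableEq C]
    {A B : TimeObj C ⥤ Type} (p : A ⟶ B) :
    InvariantUnderClockIntro p ↔
      ∀ (Eδ : TimeObj C) (l : C), l ∉ Eδ.E → ∀ n : ℕ,
        IsPullback (A.map (inclExtend Eδ l n)) (p.app Eδ)
          (p.app (Eδ.extend l n)) (B.map (inclExtend Eδ l n)) :=
  statement_6_general C p
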